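/- Let α > 0, Δ > 0, j ∈ ℕ, λ ≥ 0 and μ, σ ∈ ℝ. Let ξ be a real random variable with E[|ξ|] < ∞ and characteristic function φ, and set K₁(u) = ∫_{jΔ}^{(j+1)Δ} φ( u e^{−α((j+1)Δ − s)} ) ds, K₂(u) = ∫_0^{jΔ} φ( u (e^{−αΔ} − 1) e^{−α(jΔ − s)} ) ds, E_{j,k}(α) = (1 − e^{−kαΔ}) + (−1)^k (1 − e^{−αΔ})^k (1 − e^{−kαjΔ}), and T₁(u) = −λ(j+1)Δ + i μ e^{−αjΔ}(1 − e^{−αΔ}) u − (σ²/(4α)) E_{j,2}(α) u² + λ ( K₁(u) + K₂(u) ). If X is a real random variable with E[|X|] < ∞ whose characteristic function is exp(T₁(u)), then E[X] = μ e^{−αjΔ}(1 − e^{−αΔ}) + (λ/α) E[ξ] E_{j,1}(α). -/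

import Mathlib

/-!
The mean is the derivative at `0` of the characteristic function divided by `i`. Differentiating
under the integral sign (dominated by `|X|`) gives `i E[X]` on the left, while `exp ∘ T₁` has
derivative `T₁'(0)` at `0` because `T₁(0) = 0`. Only the drift and jump terms of `T₁` are linear
at `0`; differentiating `K₁` and `K₂` under the `ds`-integral turns `φ'(0) = i E[ξ]` into
`i E[ξ]` times integrals of exponentials, and these add up to `E_{j,1}(α) / α`.
-/

open MeasureTheory Complex

theorem Real.integral_exp_neg_mul_sub {α : ℝ} (hα : α ≠ 0) (a b : ℝ) :
    ∫ s in a..b, Real.exp (-α * (b - s)) = (1 - Real.exp (-α * (b - a))) / α := by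
  have hderiv : ∀ s ∈ Set.uIcc a b,
      HasDerivAt (fun s => Real.exp (-α * (b - s)) / α) (Real.exp (-α * (b - s))) s :=
    fun s _ => by
    have := (((hasDerivAt_id s).const_sub b).const_mul (-α)).exp.div_const α
    simpa [mul_div_cancel_right₀ _ hα] using this
  rw [intervalIntegral.integral_eq_sub_of_hasDerivAt hderiv
    ((by fun_prop : Continuous fun s => Real.exp (-α * (b - s))).intervalIntegrable a b)]
  simp
  ring

theorem hasDerivAt_intervalIntegral_comp_mul_zero {E : Type*} [NormedAddCommGroup E]
    [NormedSpace ℝ E] [CompleteSpace E] {φ φ' : ℝ → E} {C : ℝ}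
    (hφ : ∀ v, HasDerivAt φ (φ' v) v) (hφ' : ∀ v, ‖φ' v‖ ≤ C) {c : ℝ → ℝ} (hc : Continuous c)
    (a b : ℝ) :
    HasDerivAt (fun u => ∫ s in a..b, φ (u * c s)) ((∫ s in a..b, c s) • φ' 0) 0 := by
  have hφc : Continuous φ := continuous_iff_continuousAt.2 fun v => (hφ v).continuousAt
  obtain ⟨-, hderiv⟩ := intervalIntegral.hasDerivAt_integral_of_dominated_loc_of_deriv_le
    (μ := volume)
    (F' := fun u s => c s • φ' (u * c s)) (bound := fun s => |c s| * C)
    (Metric.ball_mem_nhds 0 one_pos)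
    (.of_forall fun u => (hφc.comp (continuous_const.mul hc)).aestronglyMeasurable)
    ((hφc.comp (continuous_const.mul hc)).intervalIntegrable a b)
    (by simpa using (by fun_prop : Continuous fun s => c s • φ' 0).aestronglyMeasurable)
    (.of_forall fun s _ u _ => by
      rw [norm_smul, Real.norm_eq_abs]; exact mul_le_mul_of_nonneg_left (hφ' _) (abs_nonneg _))
    ((hc.abs.mul continuous_const).intervalIntegrable a b)
    (.of_forall fun s _ u _ => (hφ (u * c s)).scomp u (hasDerivAt_mul_const (c s)))
  simpa [intervalIntegral.integral_smul_const] using hderiv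

section CharacteristicFunction

variable {Ω : Type*} [MeasurableSpace Ω] {P : Measure Ω} {ξ : Ω → ℝ}

theorem norm_cexp_I_mul_ofReal_mul (u x : ℝ) : ‖cexp (I * u * x)‖ = 1 := by
  rw [norm_exp]; simp

theorem norm_integral_I_mul_cexp_le (v : ℝ) :
    ‖∫ ω, I * ξ ω * cexp (I * v * ξ ω) ∂P‖ ≤ ∫ ω, |ξ ω| ∂P := by
  refine (norm_integral_le_integral_norm _).trans_eq (integral_congr_ae (.of_forall fun ω => ?_))
  simp [norm_cexp_I_mul_ofReal_mul]

theorem integral_I_mul_cexp_zero :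
    ∫ ω, I * ξ ω * cexp (I * (0 : ℝ) * ξ ω) ∂P = I * ↑(∫ ω, ξ ω ∂P) := by
  simp [integral_const_mul, integral_complex_ofReal]

variable [IsFiniteMeasure P]

theorem hasDerivAt_integral_cexp_I_mul (hξ : Integrable ξ P) (v : ℝ) :
    HasDerivAt (fun u : ℝ => ∫ ω, cexp (I * u * ξ ω) ∂P)
      (∫ ω, I * ξ ω * cexp (I * v * ξ ω) ∂P) v := by
  have hmeas : ∀ u : ℝ, AEStronglyMeasurable (fun ω => cexp (I * u * ξ ω)) P := fun u =>
    (by fun_prop : Continuous fun x : ℝ => cexp (I * u * x)).comp_aestronglyMeasurable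
      hξ.aestronglyMeasurable
  have hpoint : ∀ ω, ∀ u : ℝ, HasDerivAt (fun u : ℝ => cexp (I * u * ξ ω))
      (I * ξ ω * cexp (I * u * ξ ω)) u := fun ω u => by
    simpa [mul_comm, mul_left_comm, mul_assoc] using
      ((ofRealCLM.hasDerivAt (x := u)).const_mul I |>.mul_const (ξ ω : ℂ)).cexp
  have hmeas' : AEStronglyMeasurable (fun ω => I * ξ ω * cexp (I * v * ξ ω)) P :=
    (by fun_prop : Continuous fun x : ℝ => I * x * cexp (I * v * x)).comp_aestronglyMeasurable
      hξ.aestronglyMeasurable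
  have hint : Integrable (fun ω => cexp (I * v * ξ ω)) P :=
    (integrable_const (1 : ℂ)).mono (hmeas v)
      (.of_forall fun ω => by simp [norm_cexp_I_mul_ofReal_mul])
  exact (hasDerivAt_integral_of_dominated_loc_of_deriv_le (bound := fun ω => |ξ ω|)
    (Metric.ball_mem_nhds v one_pos) (.of_forall hmeas) hint hmeas'
    (.of_forall fun ω u _ => by simp [norm_cexp_I_mul_ofReal_mul]) hξ.abs
    (.of_forall fun ω u _ => hpoint ω u)).2

theorem integral_eq_of_integral_cexp_eq_cexp {X : Ω → ℝ} (hX : Integrable X P) {T : ℝ → ℂ}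
    {m : ℝ} (hchar : ∀ u : ℝ, ∫ ω, cexp (I * u * X ω) ∂P = cexp (T u)) (hT₀ : T 0 = 0)
    (hT : HasDerivAt T (I * m) 0) : ∫ ω, X ω ∂P = m := by
  have hX' := hasDerivAt_integral_cexp_I_mul hX 0
  rw [integral_I_mul_cexp_zero, funext hchar] at hX'
  have hexpT : HasDerivAt (fun u => cexp (T u)) (I * m) 0 := by simpa [hT₀] using hT.cexp
  exact_mod_cast mul_left_cancel₀ I_ne_zero (hX'.unique hexpT)

theorem hasDerivAt_intervalIntegral_comp_mul_exp (hξ : Integrable ξ P) {φ : ℝ → ℂ}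
    (hφ : ∀ u : ℝ, φ u = ∫ ω, cexp (I * u * ξ ω) ∂P) {α : ℝ} (hα : α ≠ 0) (a b : ℝ) :
    HasDerivAt (fun u => ∫ s in a..b, φ (u * Real.exp (-α * (b - s))))
      (((1 - Real.exp (-α * (b - a))) / α) • (I * ↑(∫ ω, ξ ω ∂P))) 0 := by
  rw [← Real.integral_exp_neg_mul_sub hα, ← integral_I_mul_cexp_zero, funext hφ]
  exact hasDerivAt_intervalIntegral_comp_mul_zero (hasDerivAt_integral_cexp_I_mul hξ)
    norm_integral_I_mul_cexp_le (by fun_prop) a b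

end CharacteristicFunction

theorem logReturn_first_moment_general {Ω Ωx : Type*} [MeasurableSpace Ω] [MeasurableSpace Ωx]
    (P : Measure Ω) (Px : Measure Ωx)
    [IsProbabilityMeasure P] [IsProbabilityMeasure Px]
    (α Δ lam μ σ : ℝ) (j : ℕ) (hα : 0 < α)
    (ξ : Ω → ℝ)
    (φ : ℝ → ℂ)
    (hφ : ∀ u : ℝ, φ u = ∫ ω, Complex.exp (Complex.I * (u : ℂ) * (ξ ω : ℂ)) ∂P)
    (K₁ K₂ : ℝ → ℂ)
    (hK₁ : ∀ u : ℝ, K₁ u =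
      ∫ s in ((j : ℝ) * Δ)..(((j : ℝ) + 1) * Δ), φ (u * Real.exp (-α * (((j : ℝ) + 1) * Δ - s))))
    (hK₂ : ∀ u : ℝ, K₂ u =
      ∫ s in (0:ℝ)..((j : ℝ) * Δ),
        φ (u * (Real.exp (-α * Δ) - 1) * Real.exp (-α * ((j : ℝ) * Δ - s))))
    (E : ℕ → ℝ)
    (hE : ∀ k : ℕ, E k = (1 - Real.exp (-(k : ℝ) * α * Δ))
        + (-1 : ℝ) ^ k * (1 - Real.exp (-α * Δ)) ^ k * (1 - Real.exp (-(k : ℝ) * α * (j : ℝ) * Δ)))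
    (T₁ : ℝ → ℂ)
    (hT₁ : ∀ u : ℝ, T₁ u = -((lam * ((j : ℝ) + 1) * Δ : ℝ) : ℂ)
        + Complex.I * ((μ * Real.exp (-α * (j : ℝ) * Δ) * (1 - Real.exp (-α * Δ)) : ℝ) : ℂ) * (u : ℂ)
        - ((σ ^ 2 / (4 * α) * E 2 : ℝ) : ℂ) * (u : ℂ) ^ 2
        + ((lam : ℝ) : ℂ) * (K₁ u + K₂ u))
    (X : Ωx → ℝ)
    (hchar : ∀ u : ℝ, ∫ ω, Complex.exp (Complex.I * (u : ℂ) * (X ω : ℂ)) ∂Px = Complex.exp (T₁ u))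
    (hξint : Integrable ξ P) (hXint : Integrable X Px) :
    ∫ ω, X ω ∂Px
      = μ * Real.exp (-α * (j : ℝ) * Δ) * (1 - Real.exp (-α * Δ))
        + lam / α * (∫ ω, ξ ω ∂P) * E 1 := by
  have hK₁' : HasDerivAt K₁ (((1 - Real.exp (-α * Δ)) / α) • (I * ↑(∫ ω, ξ ω ∂P))) 0 := by
    have := hasDerivAt_intervalIntegral_comp_mul_exp hξint hφ hα.ne' (j * Δ) ((j + 1) * Δ)
    rwa [show ((j : ℝ) + 1) * Δ - j * Δ = Δ by ring, ← funext hK₁] at this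
  have hK₂' : HasDerivAt K₂ ((Real.exp (-α * Δ) - 1) •
      ((1 - Real.exp (-α * (j * Δ))) / α) • (I * ↑(∫ ω, ξ ω ∂P))) 0 := by
    have := (hasDerivAt_intervalIntegral_comp_mul_exp hξint hφ hα.ne' 0 (j * Δ)).scomp_of_eq 0
      (hasDerivAt_mul_const (Real.exp (-α * Δ) - 1)) (zero_mul _).symm
    rw [sub_zero] at this
    exact funext hK₂ ▸ this
  have hT₁₀ : T₁ 0 = 0 := by
    simp [hT₁, hK₁, hK₂, hφ]
    ring
  have hT₁' : HasDerivAt T₁ (I * ↑(μ * Real.exp (-α * (j : ℝ) * Δ) * (1 - Real.exp (-α * Δ))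
      + lam / α * (∫ ω, ξ ω ∂P) * E 1)) 0 := by
    have hu : HasDerivAt (fun u : ℝ => (u : ℂ)) 1 0 := ofRealCLM.hasDerivAt
    rw [funext hT₁]
    refine ((((hasDerivAt_const _ _).add (hu.const_mul _)).sub ((hu.pow 2).const_mul _)).add
      ((hK₁'.add hK₂').const_mul _)).congr_deriv ?_
    rw [hE 1, mul_assoc (-α)]
    simp only [Nat.cast_one, neg_mul, one_mul, pow_one, real_smul]
    push_cast
    field_simp
    ring
  exact integral_eq_of_integral_cexp_eq_cexp hXint hchar hT₁₀ hT₁'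

/-- First moment of the log-return of the mean-reverting jump-diffusion model. -/
theorem logReturn_first_moment {Ω Ωx : Type*} [MeasurableSpace Ω] [MeasurableSpace Ωx]
    (P : Measure Ω) (Px : Measure Ωx)
    [IsProbabilityMeasure P] [IsProbabilityMeasure Px]
    (α Δ lam μ σ : ℝ) (j : ℕ) (hα : 0 < α) (hΔ : 0 < Δ) (hlam : 0 ≤ lam)
    (ξ : Ω → ℝ) (hξmeas : Measurable ξ)
    (φ : ℝ → ℂ)
    (hφ : ∀ u : ℝ, φ u = ∫ ω, Complex.exp (Complex.I * (u : ℂ) * (ξ ω : ℂ)) ∂P)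
    (K₁ K₂ : ℝ → ℂ)
    (hK₁ : ∀ u : ℝ, K₁ u =
      ∫ s in ((j : ℝ) * Δ)..(((j : ℝ) + 1) * Δ), φ (u * Real.exp (-α * (((j : ℝ) + 1) * Δ - s))))
    (hK₂ : ∀ u : ℝ, K₂ u =
      ∫ s in (0:ℝ)..((j : ℝ) * Δ),
        φ (u * (Real.exp (-α * Δ) - 1) * Real.exp (-α * ((j : ℝ) * Δ - s))))
    (E : ℕ → ℝ)
    (hE : ∀ k : ℕ, E k = (1 - Real.exp (-(k : ℝ) * α * Δ))
        + (-1 : ℝ) ^ k * (1 - Real.exp (-α * Δ)) ^ k * (1 - Real.exp (-(k : ℝ) * α * (j : ℝ) * Δ)))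
    (T₁ : ℝ → ℂ)
    (hT₁ : ∀ u : ℝ, T₁ u = -((lam * ((j : ℝ) + 1) * Δ : ℝ) : ℂ)
        + Complex.I * ((μ * Real.exp (-α * (j : ℝ) * Δ) * (1 - Real.exp (-α * Δ)) : ℝ) : ℂ) * (u : ℂ)
        - ((σ ^ 2 / (4 * α) * E 2 : ℝ) : ℂ) * (u : ℂ) ^ 2
        + ((lam : ℝ) : ℂ) * (K₁ u + K₂ u))
    (X : Ωx → ℝ) (hXmeas : Measurable X)
    (hchar : ∀ u : ℝ, ∫ ω, Complex.exp (Complex.I * (u : ℂ) * (X ω : ℂ)) ∂Px = Complex.exp (T₁ u))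
    (hξint : Integrable ξ P) (hXint : Integrable X Px) :
    ∫ ω, X ω ∂Px
      = μ * Real.exp (-α * (j : ℝ) * Δ) * (1 - Real.exp (-α * Δ))
        + lam / α * (∫ ω, ξ ω ∂P) * E 1 :=
  logReturn_first_moment_general P Px α Δ lam μ σ j hα ξ φ hφ K₁ K₂ hK₁ hK₂ E hE T₁ hT₁ X hchar
    hξint hXint
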